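/- arXiv:2011.05816 — 2 statements merged into one kernel-verified Lean document; each statement's English description precedes it below -/
import Mathlib

section
/- Let H ∈ R^{I×D}, T ∈ R^{K×D}, and diagonal R_1,…,R_J ∈ R^{D×D} with d-th diagonal entries forming vector r_{:d} ∈ R^J. Then Σ_{j=1}^{J}(‖H R_j‖_F² + ‖T‖_F²) ≥ 2√J · Σ_{d=1}^{D} ‖h_{:d}‖·‖r_{:d}‖·‖t_{:d}‖, with equality if and only if ‖h_{:d}‖·‖r_{:d}‖ = √J·‖t_{:d}‖ for all d. -/
lemma amgm_aux (x y : ℝ) (hx : 0 ≤ x) (hy : 0 ≤ y) :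
    2 * Real.sqrt x * Real.sqrt y ≤ x + y ∧
      (x + y = 2 * Real.sqrt x * Real.sqrt y ↔ x = y) := by
  have hxx : Real.sqrt x ^ 2 = x := Real.sq_sqrt hx
  have hyy : Real.sqrt y ^ 2 = y := Real.sq_sqrt hy
  refine ⟨by nlinarith [sq_nonneg (Real.sqrt x - Real.sqrt y)], ?_, ?_⟩
  · intro h
    have h2 : (Real.sqrt x - Real.sqrt y) ^ 2 = 0 := by nlinarith
    have hs : Real.sqrt x = Real.sqrt y := by
      have := pow_eq_zero_iff (n := 2) (by norm_num) |>.mp h2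
      linarith
    nlinarith
  · intro h
    subst h
    nlinarith

theorem stmt_3 (I K D J : ℕ)
    (H : Matrix (Fin I) (Fin D) ℝ) (T : Matrix (Fin K) (Fin D) ℝ)
    (r : Fin J → Fin D → ℝ) :
    ∑ j, ((∑ i, ∑ d, ((H * Matrix.diagonal (r j)) i d) ^ 2) +
        ∑ k, ∑ d, (T k d) ^ 2) ≥
      2 * Real.sqrt J * ∑ d, Real.sqrt (∑ i, (H i d) ^ 2) *
        Real.sqrt (∑ j, (r j d) ^ 2) * Real.sqrt (∑ k, (T k d) ^ 2) ∧
    ((∑ j, ((∑ i, ∑ d, ((H * Matrix.diagonal (r j)) i d) ^ 2) +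
        ∑ k, ∑ d, (T k d) ^ 2) =
      2 * Real.sqrt J * ∑ d, Real.sqrt (∑ i, (H i d) ^ 2) *
        Real.sqrt (∑ j, (r j d) ^ 2) * Real.sqrt (∑ k, (T k d) ^ 2)) ↔
      ∀ d, Real.sqrt (∑ i, (H i d) ^ 2) * Real.sqrt (∑ j, (r j d) ^ 2) =
        Real.sqrt J * Real.sqrt (∑ k, (T k d) ^ 2)) := by
  set A : Fin D → ℝ := fun d => ∑ i, (H i d) ^ 2 with hA
  set B : Fin D → ℝ := fun d => ∑ j, (r j d) ^ 2 with hB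
  set C : Fin D → ℝ := fun d => ∑ k, (T k d) ^ 2 with hC
  have hA0 : ∀ d, 0 ≤ A d := fun d => Finset.sum_nonneg fun i _ => sq_nonneg _
  have hB0 : ∀ d, 0 ≤ B d := fun d => Finset.sum_nonneg fun i _ => sq_nonneg _
  have hC0 : ∀ d, 0 ≤ C d := fun d => Finset.sum_nonneg fun i _ => sq_nonneg _
  have hJ0 : (0:ℝ) ≤ (J:ℝ) := Nat.cast_nonneg J
  -- rewrite LHS
  have hLHS : ∑ j, ((∑ i, ∑ d, ((H * Matrix.diagonal (r j)) i d) ^ 2) +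
        ∑ k, ∑ d, (T k d) ^ 2) = ∑ d, (A d * B d + (J:ℝ) * C d) := by
    simp only [Matrix.mul_diagonal, mul_pow, Finset.sum_add_distrib]
    congr 1
    · calc ∑ j, ∑ i, ∑ d, (H i d) ^ 2 * (r j d) ^ 2
          = ∑ j, ∑ d, ∑ i, (H i d) ^ 2 * (r j d) ^ 2 :=
            Finset.sum_congr rfl fun j _ => Finset.sum_comm
        _ = ∑ d, ∑ j, ∑ i, (H i d) ^ 2 * (r j d) ^ 2 := Finset.sum_comm
        _ = ∑ d, A d * B d := by
            refine Finset.sum_congr rfl fun d _ => ?_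
            rw [hA, hB, Finset.sum_mul_sum]
            exact Finset.sum_comm
    · rw [Finset.sum_const, Finset.card_univ, Fintype.card_fin, nsmul_eq_mul,
        Finset.sum_comm, Finset.mul_sum]
  -- rewrite RHS
  have hRHS : (2 * Real.sqrt J * ∑ d, Real.sqrt (A d) * Real.sqrt (B d) * Real.sqrt (C d))
      = ∑ d, 2 * Real.sqrt (A d * B d) * Real.sqrt ((J:ℝ) * C d) := by
    rw [Finset.mul_sum]
    apply Finset.sum_congr rfl
    intro d _
    rw [Real.sqrt_mul (hA0 d), Real.sqrt_mul hJ0]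
    ring
  have key : ∀ d, 2 * Real.sqrt (A d * B d) * Real.sqrt ((J:ℝ) * C d)
      ≤ A d * B d + (J:ℝ) * C d ∧
      (A d * B d + (J:ℝ) * C d = 2 * Real.sqrt (A d * B d) * Real.sqrt ((J:ℝ) * C d)
        ↔ A d * B d = (J:ℝ) * C d) :=
    fun d => amgm_aux _ _ (mul_nonneg (hA0 d) (hB0 d)) (mul_nonneg hJ0 (hC0 d))
  have heqv : ∀ d, (A d * B d = (J:ℝ) * C d) ↔
      (Real.sqrt (A d) * Real.sqrt (B d) = Real.sqrt J * Real.sqrt (C d)) := by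
    intro d
    rw [← Real.sqrt_mul (hA0 d), ← Real.sqrt_mul hJ0]
    exact (Real.sqrt_inj (mul_nonneg (hA0 d) (hB0 d)) (mul_nonneg hJ0 (hC0 d))).symm
  constructor
  · rw [ge_iff_le, hLHS, hRHS]
    exact Finset.sum_le_sum fun d _ => (key d).1
  · rw [hLHS, hRHS]
    rw [eq_comm, Finset.sum_eq_sum_iff_of_le fun d _ => (key d).1]
    constructor
    · intro h d
      exact (heqv d).mp ((key d).2.mp (h d (Finset.mem_univ d)).symm)
    · intro h d _
      exact ((key d).2.mpr ((heqv d).mpr (h d))).symm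
end

section
/- Let X̂_j = H R_j Tᵀ with R_j diagonal for j = 1,…,J. Then (1/(2√J)) Σ_{j=1}^{J}(‖H R_j‖_F² + ‖T‖_F²) ≥ ‖X̂‖_*, where X̂ is the tensor with frontal slices X̂_j and ‖·‖_* is the tensor nuclear 2-norm. -/
/-- The set of values `∑ ‖u_i‖‖v_i‖‖w_i‖` over finite rank-one decompositions of `A`. -/
def decompSums (n1 n2 n3 : ℕ) (A : Fin n1 → Fin n2 → Fin n3 → ℝ) : Set ℝ :=
  {s | ∃ (m : ℕ) (u : Fin m → EuclideanSpace ℝ (Fin n1))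
        (v : Fin m → EuclideanSpace ℝ (Fin n2))
        (w : Fin m → EuclideanSpace ℝ (Fin n3)),
      (∀ i j k, A i j k = ∑ d, u d i * v d j * w d k) ∧
      s = ∑ d, ‖u d‖ * ‖v d‖ * ‖w d‖}

/-- The tensor nuclear 2-norm. -/
noncomputable def nuclear2 (n1 n2 n3 : ℕ) (A : Fin n1 → Fin n2 → Fin n3 → ℝ) : ℝ :=
  sInf (decompSums n1 n2 n3 A)

/-- Squared Frobenius norm. -/
def frob2 {m n : ℕ} (M : Matrix (Fin m) (Fin n) ℝ) : ℝ :=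
  ∑ i, ∑ j, (M i j) ^ 2

/-!
Write `ρ_d = (r_j d)_j`. The columns give a CP decomposition `X̂ = ∑_d H_{·d} ⊗ ρ_d ⊗ T_{·d}`, so
`‖X̂‖_* ≤ ∑_d ‖H_{·d}‖ ‖ρ_d‖ ‖T_{·d}‖`. By AM-GM, `2√J · ‖H_{·d}‖ ‖ρ_d‖ ‖T_{·d}‖` is at most
`‖H_{·d}‖² ‖ρ_d‖² + J ‖T_{·d}‖²`, and summing over `d` gives `∑_j (‖H R_j‖_F² + ‖T‖_F²)`.
-/

def euclideanCol {m n : ℕ} (M : Matrix (Fin m) (Fin n) ℝ) (d : Fin n) : EuclideanSpace ℝ (Fin m) :=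
  WithLp.toLp 2 fun i => M i d

lemma norm_euclideanCol_sq {m n : ℕ} (M : Matrix (Fin m) (Fin n) ℝ) (d : Fin n) :
    ‖euclideanCol M d‖ ^ 2 = ∑ i, M i d ^ 2 := by
  simp [euclideanCol, EuclideanSpace.norm_sq_eq]

lemma frob2_eq_sum_norm_euclideanCol_sq {m n : ℕ} (M : Matrix (Fin m) (Fin n) ℝ) :
    frob2 M = ∑ d, ‖euclideanCol M d‖ ^ 2 := by
  simp only [frob2, norm_euclideanCol_sq]
  exact Finset.sum_comm

lemma frob2_mul_diagonal {m n : ℕ} (M : Matrix (Fin m) (Fin n) ℝ) (r : Fin n → ℝ) :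
    frob2 (M * Matrix.diagonal r) = ∑ d, ‖euclideanCol M d‖ ^ 2 * r d ^ 2 := by
  simp only [frob2_eq_sum_norm_euclideanCol_sq, norm_euclideanCol_sq, Matrix.mul_diagonal,
    mul_pow, Finset.sum_mul]

lemma sum_frob2_mul_diagonal {m n J : ℕ} (M : Matrix (Fin m) (Fin n) ℝ) (r : Fin J → Fin n → ℝ) :
    ∑ j, frob2 (M * Matrix.diagonal (r j)) =
      ∑ d, (‖euclideanCol M d‖ * ‖euclideanCol (Matrix.of r) d‖) ^ 2 := by
  simp only [frob2_mul_diagonal, mul_pow, norm_euclideanCol_sq (Matrix.of r), Matrix.of_apply,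
    Finset.mul_sum]
  exact Finset.sum_comm

lemma mul_diagonal_mul_transpose_apply {m n p : ℕ} (U : Matrix (Fin m) (Fin n) ℝ)
    (w : Fin n → ℝ) (W : Matrix (Fin p) (Fin n) ℝ) (i : Fin m) (k : Fin p) :
    (U * Matrix.diagonal w * W.transpose) i k = ∑ d, U i d * w d * W k d := by
  rw [Matrix.mul_apply]
  simp only [Matrix.mul_diagonal, Matrix.transpose_apply]

lemma nuclear2_le_sum_norm_euclideanCol {n1 n2 n3 D : ℕ} (A : Fin n1 → Fin n2 → Fin n3 → ℝ)
    (U : Matrix (Fin n1) (Fin D) ℝ) (V : Matrix (Fin n2) (Fin D) ℝ) (W : Matrix (Fin n3) (Fin D) ℝ)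
    (hA : ∀ i j k, A i j k = ∑ d, U i d * V j d * W k d) :
    nuclear2 n1 n2 n3 A ≤
      ∑ d, ‖euclideanCol U d‖ * ‖euclideanCol V d‖ * ‖euclideanCol W d‖ := by
  refine csInf_le ⟨0, ?_⟩ ⟨D, euclideanCol U, euclideanCol V, euclideanCol W, hA, rfl⟩
  rintro s ⟨m, u, v, w, -, rfl⟩
  positivity

theorem stmt_10 (I J K D : ℕ)
    (H : Matrix (Fin I) (Fin D) ℝ) (T : Matrix (Fin K) (Fin D) ℝ)
    (r : Fin J → Fin D → ℝ)
    (X : Fin I → Fin J → Fin K → ℝ)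
    (hX : ∀ i j k, X i j k = (H * Matrix.diagonal (r j) * Matrix.transpose T) i k) :
    (1 / (2 * Real.sqrt J)) *
        ∑ j, (frob2 (H * Matrix.diagonal (r j)) + frob2 T) ≥
      nuclear2 I J K X := by
  have hbound := nuclear2_le_sum_norm_euclideanCol X H (Matrix.of r) T fun i j k => by
    rw [hX, mul_diagonal_mul_transpose_apply]; rfl
  set h := fun d => ‖euclideanCol H d‖
  set ρ := fun d => ‖euclideanCol (Matrix.of r) d‖
  set t := fun d => ‖euclideanCol T d‖
  -- for `J = 0` the left side is the junk value `1 / 0 * _ = 0`, and every `ρ d` vanishes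
  obtain rfl | hJ := J.eq_zero_or_pos
  · simpa [ρ, Subsingleton.elim (euclideanCol (Matrix.of r) _) 0] using hbound
  have hsum : ∑ j, (frob2 (H * Matrix.diagonal (r j)) + frob2 T) =
      ∑ d, ((h d * ρ d) ^ 2 + (Real.sqrt J * t d) ^ 2) := by
    rw [Finset.sum_add_distrib, Finset.sum_add_distrib, sum_frob2_mul_diagonal, Finset.sum_const,
      Finset.card_fin, nsmul_eq_mul, frob2_eq_sum_norm_euclideanCol_sq T, Finset.mul_sum]
    simp only [mul_pow, Real.sq_sqrt J.cast_nonneg, h, ρ, t]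
  have hsqrt : 0 < 2 * Real.sqrt J := by positivity
  rw [hsum, ge_iff_le, one_div_mul_eq_div, le_div_iff₀ hsqrt]
  calc nuclear2 I J K X * (2 * Real.sqrt J)
      ≤ (∑ d, h d * ρ d * t d) * (2 * Real.sqrt J) := by gcongr
    _ = ∑ d, 2 * (h d * ρ d) * (Real.sqrt J * t d) := by
        rw [Finset.sum_mul]
        exact Finset.sum_congr rfl fun d _ => by ring
    _ ≤ _ := Finset.sum_le_sum fun d _ => two_mul_le_add_sq _ _
end
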